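/- arXiv:1510.01141 — 3 statements merged into one kernel-verified Lean document; each statement's English description precedes it below -/
import Mathlib

section
/- For every integer m ≥ 1, every integer r ≥ 2, every vector a = (a_1,…,a_r) of nonzero real numbers with a_1 + a_2 ≠ 0, and every x = (x_1,…,x_r) ∈ ℝ^r, one has ζ_fml(1−m, a, x) = ζ_fml(1−m, (a_1, a_1+a_2, a_3,…,a_r), (x_1−x_2, x_2, x_3,…,x_r)) + ζ_fml(1−m, (a_1+a_2, a_2, a_3,…,a_r), (x_1, x_2−x_1+1, x_3,…,x_r)). -/
/-!
Up to the factor `(-1)^r (m-1)!`, `ζ_fml(1-m, a, x)` is the coefficient of `T^(m+r-1)` in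
`∏ i, G(a i, x i)`, where
`G(a, x) = bernoulliSeries a x = T e^{xaT} / (e^{aT} - 1) = ∑ B_n(x) a^(n-1) T^n / n!`.
The subdivision formula is therefore the power series identity
`G(a, x) G(b, y) = G(a, x - y) G(a + b, y) + G(a + b, x) G(b, y - x + 1)`,
multiplied by the product of the remaining factors.
-/

open scoped BigOperators

/-- The formal multiple zeta value `zetaFml m a x = ζ_fml(1 - m, a, x)` of the paper:
`(-1)^r (m-1)! ∑_{l, Σ l i = m + r - 1} ∏_i B_{l i}(x i) * (a i)^(l i - 1) / (l i)!`,
where `B_l` is the `l`-th Bernoulli polynomial (normalized with `B₁(X) = X - 1/2`)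
and `(a i)^(l i - 1)` is an integer (`zpow`) power. -/
noncomputable def zetaFml (m : ℕ) {r : ℕ} (a x : Fin r → ℝ) : ℝ :=
  (-1 : ℝ) ^ r * (Nat.factorial (m - 1)) *
    ∑ l ∈ Finset.Nat.antidiagonalTuple r (m + r - 1),
      ∏ i, Polynomial.aeval (x i) (Polynomial.bernoulli (l i)) * a i ^ ((l i : ℤ) - 1)
        / (Nat.factorial (l i))

open PowerSeries

section BernoulliSeries

variable {K : Type*} [Field K] [Algebra ℚ K]

noncomputable def bernoulliSeries (a x : K) : K⟦X⟧ :=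
  mk fun n => Polynomial.aeval x (Polynomial.bernoulli n) * a ^ ((n : ℤ) - 1) / n.factorial

@[simp]
theorem coeff_bernoulliSeries (a x : K) (n : ℕ) :
    coeff n (bernoulliSeries a x)
      = Polynomial.aeval x (Polynomial.bernoulli n) * a ^ ((n : ℤ) - 1) / n.factorial :=
  coeff_mk _ _

theorem bernoulliSeries_eq_C_inv_mul_rescale {a : K} (ha : a ≠ 0) (x : K) :
    bernoulliSeries a x = C a⁻¹ * rescale a
      (mk fun n => Polynomial.aeval x ((1 / n.factorial : ℚ) • Polynomial.bernoulli n)) := by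
  ext n
  simp only [coeff_bernoulliSeries, coeff_C_mul, coeff_rescale, coeff_mk, map_smul,
    zpow_sub_one₀ ha, zpow_natCast]
  simp [Algebra.smul_def]
  field_simp

theorem bernoulliSeries_mul_exp_sub_one {a : K} (ha : a ≠ 0) (x : K) :
    bernoulliSeries a x * (rescale a (exp K) - 1) = X * rescale (x * a) (exp K) := by
  have h := congrArg (fun f => C a⁻¹ * rescale a f)
    (Polynomial.bernoulli_generating_function (A := K) x)
  simp only [map_mul, map_sub, map_one, rescale_rescale, rescale_X] at h
  rw [bernoulliSeries_eq_C_inv_mul_rescale ha, mul_assoc, h, ← mul_assoc, ← mul_assoc,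
    ← map_mul, inv_mul_cancel₀ ha, map_one, one_mul]

theorem rescale_exp_sub_one_ne_zero {c : K} (hc : c ≠ 0) : rescale c (exp K) - 1 ≠ 0 := by
  intro h
  have h1 := congrArg (coeff 1) h
  simp [coeff_rescale, coeff_exp] at h1
  exact hc h1

theorem bernoulliSeries_mul_bernoulliSeries_mul {a b : K} (ha : a ≠ 0) (hb : b ≠ 0) (x y : K) :
    bernoulliSeries a x * bernoulliSeries b y * ((rescale a (exp K) - 1) * (rescale b (exp K) - 1))
      = X ^ 2 * rescale (x * a + y * b) (exp K) := by
  rw [← exp_mul_exp_eq_exp_add]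
  linear_combination
    bernoulliSeries b y * (rescale b (exp K) - 1) * bernoulliSeries_mul_exp_sub_one ha x
    + X * rescale (x * a) (exp K) * bernoulliSeries_mul_exp_sub_one hb y

theorem bernoulliSeries_mul_bernoulliSeries_eq_add {a b : K} (ha : a ≠ 0) (hb : b ≠ 0)
    (hab : a + b ≠ 0) (x y : K) :
    bernoulliSeries a x * bernoulliSeries b y
      = bernoulliSeries a (x - y) * bernoulliSeries (a + b) y
        + bernoulliSeries (a + b) x * bernoulliSeries b (y - x + 1) := by
  have h₁ := bernoulliSeries_mul_bernoulliSeries_mul ha hb x y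
  have h₂ := bernoulliSeries_mul_bernoulliSeries_mul ha hab (x - y) y
  have h₃ := bernoulliSeries_mul_bernoulliSeries_mul hab hb x (y - x + 1)
  rw [show (x - y) * a + y * (a + b) = x * a + y * b by ring] at h₂
  rw [show x * (a + b) + (y - x + 1) * b = x * a + y * b + b by ring,
    ← exp_mul_exp_eq_exp_add (x * a + y * b) b] at h₃
  -- After clearing denominators this is `(e^{bT} - 1) + e^{bT} (e^{aT} - 1) = e^{(a+b)T} - 1`.
  refine mul_right_cancel₀ (mul_ne_zero (mul_ne_zero (rescale_exp_sub_one_ne_zero ha)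
    (rescale_exp_sub_one_ne_zero hb)) (rescale_exp_sub_one_ne_zero hab)) ?_
  linear_combination (rescale (a + b) (exp K) - 1) * h₁ - (rescale b (exp K) - 1) * h₂
    - (rescale a (exp K) - 1) * h₃
    - X ^ 2 * rescale (x * a + y * b) (exp K) * exp_mul_exp_eq_exp_add a b

end BernoulliSeries

theorem zetaFml_eq_coeff_prod (m : ℕ) {r : ℕ} (a x : Fin r → ℝ) :
    zetaFml m a x = (-1) ^ r * (m - 1).factorial *
      coeff (m + r - 1) (∏ i, bernoulliSeries (a i) (x i)) := by
  rw [zetaFml, coeff_prod]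
  congr 1
  refine Finset.sum_bij' (fun l _ => Finsupp.equivFunOnFinite.symm l) (fun f _ => ⇑f)
    ?_ ?_ (fun _ _ => rfl) (fun f _ => Finsupp.equivFunOnFinite.symm_apply_apply f) ?_
  · intro l hl
    rw [Finset.Nat.mem_antidiagonalTuple] at hl
    simpa [Finset.mem_finsuppAntidiag] using hl
  · intro f hf
    rw [Finset.mem_finsuppAntidiag] at hf
    exact Finset.Nat.mem_antidiagonalTuple.mpr hf.1
  · intro l _
    simp

theorem prod_univ_fin_add_two {M : Type*} [CommMonoid M] {r : ℕ} (f : Fin (r + 2) → M) :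
    ∏ i, f i = f 0 * f 1 * ∏ i : Fin r, f i.succ.succ := by
  rw [Fin.prod_univ_succ, Fin.prod_univ_succ, Fin.succ_zero_eq_one, mul_assoc]

theorem zetaFml_cone_subdivision_two_general (m : ℕ) (r : ℕ) (a x : Fin (r + 2) → ℝ)
    (ha : ∀ i, a i ≠ 0) (h12 : a 0 + a 1 ≠ 0) :
    zetaFml m a x
      = zetaFml m (Function.update a 1 (a 0 + a 1)) (Function.update x 0 (x 0 - x 1))
        + zetaFml m (Function.update a 0 (a 0 + a 1)) (Function.update x 1 (x 1 - x 0 + 1)) := by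
  have h01 : (0 : Fin (r + 2)) ≠ 1 := by simp
  simp only [zetaFml_eq_coeff_prod, ← mul_add, ← map_add]
  simp only [prod_univ_fin_add_two (fun i => bernoulliSeries _ _), Function.update_self,
    Function.update_of_ne h01, Function.update_of_ne h01.symm,
    Function.update_of_ne (Fin.succ_succ_ne_one _), Function.update_of_ne (Fin.succ_ne_zero _)]
  rw [bernoulliSeries_mul_bernoulliSeries_eq_add (ha 0) (ha 1) h12, add_mul]

theorem zetaFml_cone_subdivision_two (m : ℕ) (hm : 1 ≤ m) (r : ℕ) (a x : Fin (r + 2) → ℝ)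
    (ha : ∀ i, a i ≠ 0) (h12 : a 0 + a 1 ≠ 0) :
    zetaFml m a x
      = zetaFml m (Function.update a 1 (a 0 + a 1)) (Function.update x 0 (x 0 - x 1))
        + zetaFml m (Function.update a 0 (a 0 + a 1)) (Function.update x 1 (x 1 - x 0 + 1)) :=
  zetaFml_cone_subdivision_two_general m r a x ha h12
end

section
/- For every integer m ≥ 1, every integer r ≥ 2, every vector a = (a_1,…,a_r) of nonzero real numbers and all x_2,…,x_r ∈ ℝ, one has ζ_fml(1−m, a, (1, x_2,…,x_r)) + ζ_fml(1−m, (−a_1, a_2,…,a_r), (1, x_2,…,x_r)) + ζ_fml(1−m, (a_2,…,a_r), (x_2,…,x_r)) = 0. -/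
/-!
Split off the first entry `l₀` of each index tuple. In the first two terms the first variable is
`1` and only the sign of `a₀` differs, so they combine into a single sum weighted by
`B_{l₀}(1) (a₀^{l₀-1} + (-a₀)^{l₀-1}) / l₀!`. This weight vanishes for even `l₀` (odd exponent),
and for odd `l₀ ≥ 3` because `B_{l₀}(1) = B'_{l₀} = 0`; for `l₀ = 1` it is `2 B₁(1) = 1`. What
remains is the `(r + 1)`-fold sum of the third term, with the opposite sign `(-1)^(r+2)`.
-/

open scoped BigOperators

open Finset Polynomial

namespace Finset.Nat

theorem sum_antidiagonalTuple_succ {M : Type*} [AddCommMonoid M] (k n : ℕ)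
    (f : (Fin (k + 1) → ℕ) → M) :
    ∑ l ∈ antidiagonalTuple (k + 1) n, f l
      = ∑ p ∈ antidiagonal n, ∑ l ∈ antidiagonalTuple k p.2, f (Fin.cons p.1 l) := by
  rw [sum_sigma']
  refine sum_nbij' (fun l => ⟨(l 0, ∑ i, Fin.tail l i), Fin.tail l⟩)
    (fun q => Fin.cons q.1.1 q.2) ?_ ?_ ?_ ?_ ?_
  · intro l hl
    simp only [mem_antidiagonalTuple, Fin.sum_univ_succ] at hl
    simp [mem_antidiagonalTuple, Fin.tail, hl.symm]
  · intro q hq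
    simp only [mem_sigma, HasAntidiagonal.mem_antidiagonal, mem_antidiagonalTuple] at hq
    simp [mem_antidiagonalTuple, Fin.sum_univ_succ, hq.1, hq.2]
  · intro l _
    exact Fin.cons_self_tail l
  · intro q hq
    simp only [mem_sigma, HasAntidiagonal.mem_antidiagonal, mem_antidiagonalTuple] at hq
    ext <;> simp [hq.2]
  · intro l _
    rw [Fin.cons_self_tail]

theorem sum_antidiagonalTuple_succ_prod {R : Type*} [CommSemiring R] (k n : ℕ)
    (F : Fin (k + 1) → ℕ → R) :
    ∑ l ∈ antidiagonalTuple (k + 1) n, ∏ i, F i (l i)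
      = ∑ p ∈ antidiagonal n, F 0 p.1 * ∑ l ∈ antidiagonalTuple k p.2, ∏ i, F i.succ (l i) := by
  rw [sum_antidiagonalTuple_succ]
  simp only [mul_sum, Fin.prod_univ_succ, Fin.cons_zero, Fin.cons_succ]

theorem sum_antidiagonal_ite_fst_eq_one {M : Type*} [AddCommMonoid M] (n : ℕ)
    (g : ℕ → M) :
    ∑ p ∈ antidiagonal (n + 1), (if p.1 = 1 then g p.2 else 0) = g n := by
  rw [sum_ite, sum_const_zero, add_zero, sum_eq_single_of_mem (1, n)]
  · simp [add_comm]
  · intro p hp hne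
    simp only [mem_filter, HasAntidiagonal.mem_antidiagonal] at hp hne
    exact absurd (Prod.ext hp.2 (by omega)) hne

end Finset.Nat

section BernoulliTerm

variable {K : Type*} [Field K] [CharZero K]

theorem Polynomial.aeval_one_bernoulli (l : ℕ) :
    aeval (1 : K) (bernoulli l) = algebraMap ℚ K (bernoulli' l) := by
  rw [← map_one (algebraMap ℚ K), aeval_algebraMap_apply, coe_aeval_eq_eval, bernoulli_eval_one]

noncomputable def bernoulliTerm (x b : K) (l : ℕ) : K :=
  aeval x (bernoulli l) * b ^ ((l : ℤ) - 1) / l.factorial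

theorem bernoulliTerm_one_add_bernoulliTerm_one_neg (b : K) (l : ℕ) :
    bernoulliTerm 1 b l + bernoulliTerm 1 (-b) l = if l = 1 then 1 else 0 := by
  unfold bernoulliTerm
  split_ifs with hl
  · subst hl
    norm_num [aeval_one_bernoulli, bernoulli'_one]
  rcases Nat.even_or_odd l with he | ho
  · have : Odd ((l : ℤ) - 1) := by
      obtain ⟨c, rfl⟩ := he
      exact ⟨c - 1, by push_cast; ring⟩
    rw [this.neg_zpow]
    ring
  · have : 1 < l := by
      obtain ⟨c, rfl⟩ := ho
      omega
    rw [aeval_one_bernoulli, bernoulli'_eq_zero_of_odd ho this]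
    simp

end BernoulliTerm

noncomputable def bernoulliTupleSum {r : ℕ} (x b : Fin r → ℝ) (n : ℕ) : ℝ :=
  ∑ l ∈ Finset.Nat.antidiagonalTuple r n, ∏ i, bernoulliTerm (x i) (b i) (l i)

theorem zetaFml_eq (m : ℕ) {r : ℕ} (a x : Fin r → ℝ) :
    zetaFml m a x = (-1) ^ r * (m - 1).factorial * bernoulliTupleSum x a (m + r - 1) :=
  rfl

theorem bernoulliTupleSum_cons {r : ℕ} (y : ℝ) (x : Fin r → ℝ) (b : Fin (r + 1) → ℝ) (n : ℕ) :
    bernoulliTupleSum (Fin.cons y x) b n = ∑ p ∈ antidiagonal n,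
      bernoulliTerm y (b 0) p.1 * bernoulliTupleSum x (fun i => b i.succ) p.2 := by
  rw [bernoulliTupleSum, Finset.Nat.sum_antidiagonalTuple_succ_prod]
  simp only [Fin.cons_zero, Fin.cons_succ, bernoulliTupleSum]

theorem zetaFml_three_term_general (m : ℕ) (r : ℕ) (a : Fin (r + 2) → ℝ)
    (x : Fin (r + 1) → ℝ) :
    zetaFml m a (Fin.cons 1 x) + zetaFml m (Function.update a 0 (-(a 0))) (Fin.cons 1 x)
      + zetaFml m (fun i => a i.succ) x = 0 := by
  have htail (i : Fin (r + 1)) : Function.update a 0 (-(a 0)) i.succ = a i.succ :=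
    Function.update_of_ne i.succ_ne_zero _ _
  have hpair : ∑ p ∈ antidiagonal (m + r + 1),
      (bernoulliTerm 1 (a 0) p.1 + bernoulliTerm 1 (-a 0) p.1) *
        bernoulliTupleSum x (fun i => a i.succ) p.2 =
      bernoulliTupleSum x (fun i => a i.succ) (m + r) := by
    simp only [bernoulliTerm_one_add_bernoulliTerm_one_neg, ite_mul, one_mul, zero_mul]
    exact Finset.Nat.sum_antidiagonal_ite_fst_eq_one _ _
  simp only [zetaFml_eq, bernoulliTupleSum_cons, htail, Function.update_self,
    show m + (r + 2) - 1 = m + r + 1 by omega, show m + (r + 1) - 1 = m + r by omega]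
  rw [← hpair]
  simp only [add_mul, sum_add_distrib]
  ring

theorem zetaFml_three_term (m : ℕ) (hm : 1 ≤ m) (r : ℕ) (a : Fin (r + 2) → ℝ)
    (ha : ∀ i, a i ≠ 0) (x : Fin (r + 1) → ℝ) :
    zetaFml m a (Fin.cons 1 x) + zetaFml m (Function.update a 0 (-(a 0))) (Fin.cons 1 x)
      + zetaFml m (fun i => a i.succ) x = 0 :=
  zetaFml_three_term_general m r a x
end

section
/- Let r ≥ 2 be an integer, let x = (x_1,…,x_r) ∈ ℝ^r, and let a = (a_1,…,a_r) and a' = (a_1',…,a_r') be vectors of nonzero real numbers with a_q a_p' − a_p a_q' ≠ 0 for all p ≠ q. Then Σ_{p=1}^r ζ_fml(−1, (a_q/a_p − a_q'/a_p')_{q ≠ p}, (x_q)_{q ≠ p}) = ζ_fml(0, a', x) − ζ_fml(0, a, x), where (y_q)_{q ≠ p} denotes the (r−1)-dimensional vector obtained by deleting the p-th coordinate. -/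
/-!
Deleting the coordinate `p` matches the terms of `ζ_fml(-1, ·)` with the terms of `ζ_fml(0, ·)`
indexed by tuples `l` with `l p = 0` (as `B₀ = 1`). After exchanging the two sums it remains to
show, for each `l` with `∑ l i = r + 2`, that `∏ a_i^(l_i-1) - ∏ a'_i^(l_i-1)` is the sum over the
zeros `p` of `l` of `∏_{i ≠ p} (a_i/a_p - a'_i/a'_p)^(l_i-1)`. Divided by `∏ a'_i^(l_i-1)`, this is
the partial fraction expansion at `t = 0` of the rational function `∏ (t + a_i/a'_i)^(l_i-1)`: it
has degree `0`, tends to `1` at infinity, and has simple poles at `-a_p/a'_p` for the zeros `p`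
of `l`. The expansion follows from Lagrange interpolation of its numerator at the poles.
-/

open scoped BigOperators

open Polynomial Finset

namespace Lagrange

variable {F ι : Type*} [Field F] [DecidableEq ι] {s : Finset ι} {v : ι → F}

theorem eval_div_eval_nodal_of_monic (hvs : Set.InjOn v s) {N : F[X]} (hN : N.Monic)
    (hdeg : N.natDegree = #s) {x : F} (hx : ∀ i ∈ s, x ≠ v i) :
    N.eval x / (nodal s v).eval x
      = 1 + ∑ i ∈ s, nodalWeight s v i * (x - v i)⁻¹ * N.eval (v i) := by
  have hlt : (N - nodal s v).degree < #s := by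
    have hNdeg : N.degree = #s := by rw [degree_eq_natDegree hN.ne_zero, hdeg]
    rw [← hNdeg]
    exact degree_sub_lt_left (by rw [hNdeg, degree_nodal]) hN.ne_zero
      (by rw [hN.leadingCoeff, nodal_monic.leadingCoeff])
  have hx' := congrArg (eval x) (eq_interpolate hvs hlt)
  rw [eval_interpolate_not_at_node _ hx, eval_sub] at hx'
  have hvals : ∀ i ∈ s, (N - nodal s v).eval (v i) = N.eval (v i) := fun i hi => by
    rw [eval_sub, eval_nodal_at_node hi, sub_zero]
  rw [sum_congr rfl fun i hi => by rw [hvals i hi]] at hx'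
  rw [div_eq_iff (eval_nodal_not_at_node hx)]
  linear_combination hx'

end Lagrange

section Exponents

variable {ι : Type*} (l : ι → ℕ)

theorem Finset.prod_zpow_pred {G : Type*} [DivisionCommMonoid G] (s : Finset ι) (c : ι → G) :
    ∏ i ∈ s, c i ^ ((l i : ℤ) - 1)
      = (∏ i ∈ s with l i = 0, (c i)⁻¹) * ∏ i ∈ s with l i ≠ 0, c i ^ (l i - 1) := by
  rw [← prod_filter_mul_prod_filter_not s (l · = 0)]
  congr 1
  · exact prod_congr rfl fun i hi => by simp [(mem_filter.1 hi).2]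
  · refine prod_congr rfl fun i hi => ?_
    rw [← zpow_natCast, Nat.cast_pred (Nat.pos_of_ne_zero (mem_filter.1 hi).2)]

theorem Finset.prod_zpow_eq_zpow_sum {G₀ : Type*} [CommGroupWithZero G₀] {a : G₀} (ha : a ≠ 0)
    (s : Finset ι) (e : ι → ℤ) : ∏ i ∈ s, a ^ e i = a ^ ∑ i ∈ s, e i := by
  induction s using Finset.cons_induction with
  | empty => simp
  | cons i s hi ih => rw [prod_cons, sum_cons, zpow_add₀ ha, ih]

variable [Fintype ι]

theorem sum_pred_filter_ne_zero (hl : ∑ i, l i = Fintype.card ι) :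
    ∑ i with l i ≠ 0, (l i - 1) = #{i | l i = 0} := by
  have hpred : ∑ i with l i ≠ 0, (l i - 1) + #{i | l i ≠ 0} = ∑ i with l i ≠ 0, l i := by
    rw [card_eq_sum_ones, ← sum_add_distrib]
    exact sum_congr rfl fun i hi => Nat.sub_add_cancel (Nat.pos_of_ne_zero (mem_filter.1 hi).2)
  have hcard : #{i | l i = 0} + #{i | l i ≠ 0} = Fintype.card ι :=
    card_filter_add_card_filter_not _
  rw [sum_filter_ne_zero, hl] at hpred
  omega

theorem sum_erase_zpow_pred [DecidableEq ι] (hl : ∑ i, l i = Fintype.card ι) {p : ι}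
    (hp : l p = 0) : ∑ i ∈ univ.erase p, ((l i : ℤ) - 1) = 1 := by
  have htot : ∑ i, ((l i : ℤ) - 1) = 0 := by
    rw [sum_sub_distrib, ← Nat.cast_sum, hl]; simp
  rw [← add_sum_erase _ _ (mem_univ p), hp, Nat.cast_zero] at htot
  linarith

end Exponents

section PartialFractions

variable {ι K : Type*} [Fintype ι] [DecidableEq ι] [Field K] (l : ι → ℕ)

theorem prod_sub_zpow_pred_sub_one (hl : ∑ i, l i = Fintype.card ι) {v : ι → K}
    (hv : Set.InjOn v {i | l i = 0}) {t : K} (ht : ∀ p, l p = 0 → t ≠ v p) :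
    ∏ i, (t - v i) ^ ((l i : ℤ) - 1) - 1
      = ∑ p with l p = 0, (t - v p)⁻¹ * ∏ i ∈ univ.erase p, (v p - v i) ^ ((l i : ℤ) - 1) := by
  set N : K[X] := ∏ i with l i ≠ 0, (X - C (v i)) ^ (l i - 1)
  have hmonic : ∀ i ∈ ({i | l i ≠ 0} : Finset ι), ((X - C (v i)) ^ (l i - 1)).Monic :=
    fun i _ => (monic_X_sub_C _).pow _
  have hN : N.Monic := monic_prod_of_monic _ _ hmonic
  have hdeg : N.natDegree = #{i | l i = 0} := by
    rw [natDegree_prod_of_monic _ _ hmonic, ← sum_pred_filter_ne_zero l hl]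
    simp only [natDegree_pow, natDegree_X_sub_C, mul_one]
  have hpf := Lagrange.eval_div_eval_nodal_of_monic (by simpa using hv) hN hdeg
    (fun p hp => ht p (mem_filter.1 hp).2)
  have hlhs : ∏ i, (t - v i) ^ ((l i : ℤ) - 1)
      = N.eval t / (Lagrange.nodal {i | l i = 0} v).eval t := by
    rw [prod_zpow_pred, Lagrange.eval_nodal, eval_prod, div_eq_inv_mul, prod_inv_distrib]
    simp only [eval_pow, eval_sub, eval_X, eval_C]
  rw [hlhs, hpf, add_sub_cancel_left]
  refine sum_congr rfl fun p hp => ?_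
  have hp0 : l p = 0 := (mem_filter.1 hp).2
  rw [prod_zpow_pred, filter_erase, filter_erase,
    erase_eq_of_notMem (s := ({i | l i ≠ 0} : Finset ι)) (by simp [hp0]), Lagrange.nodalWeight,
    eval_prod]
  simp only [eval_pow, eval_sub, eval_X, eval_C]
  ring

theorem prod_zpow_pred_sub_prod_zpow_pred (hl : ∑ i, l i = Fintype.card ι) {a a' : ι → K}
    (ha : ∀ i, a i ≠ 0) (ha' : ∀ i, a' i ≠ 0)
    (hnd : ∀ p q, p ≠ q → a q * a' p - a p * a' q ≠ 0) :
    ∏ i, a i ^ ((l i : ℤ) - 1) - ∏ i, a' i ^ ((l i : ℤ) - 1)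
      = ∑ p with l p = 0, ∏ i ∈ univ.erase p, (a i / a p - a' i / a' p) ^ ((l i : ℤ) - 1) := by
  set v : ι → K := fun i => -(a i / a' i)
  set A' := ∏ i, a' i ^ ((l i : ℤ) - 1)
  have hv : Set.InjOn v {i | l i = 0} := fun p _ q _ hpq => by
    by_contra hne
    refine hnd p q hne ?_
    simp only [v, neg_inj, div_eq_div_iff (ha' p) (ha' q)] at hpq
    linear_combination -hpq
  have ht : ∀ p, l p = 0 → (0 : K) ≠ v p := fun p _ => by
    simpa [v, eq_comm] using div_ne_zero (ha p) (ha' p)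
  have hmain : ∏ i, a i ^ ((l i : ℤ) - 1) = A' * ∏ i, (0 - v i) ^ ((l i : ℤ) - 1) := by
    rw [← prod_mul_distrib]
    refine prod_congr rfl fun i _ => ?_
    rw [← mul_zpow]
    congr 1
    simp only [v]
    field_simp [ha' i]
    ring
  have hterm : ∀ p, l p = 0 → ∏ i ∈ univ.erase p, (a i / a p - a' i / a' p) ^ ((l i : ℤ) - 1)
      = A' * ((0 - v p)⁻¹ * ∏ i ∈ univ.erase p, (v p - v i) ^ ((l i : ℤ) - 1)) := by
    intro p hp
    have hb : ∀ i, a i / a p - a' i / a' p = (a' i / a p) * (v p - v i) := fun i => by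
      simp only [v]
      field_simp [ha p, ha' p, ha' i]
      ring
    have hscale : ∏ i ∈ univ.erase p, (a' i / a p) ^ ((l i : ℤ) - 1) = A' * (0 - v p)⁻¹ := by
      have hA' : ∏ i ∈ univ.erase p, a' i ^ ((l i : ℤ) - 1) = A' * a' p := by
        simp only [A', ← mul_prod_erase univ _ (mem_univ p), hp, Nat.cast_zero, zero_sub,
          zpow_neg_one]
        field_simp [ha' p]
      simp only [div_zpow, prod_div_distrib, prod_zpow_eq_zpow_sum (ha p),
        sum_erase_zpow_pred l hl hp, zpow_one, hA', v]
      field_simp [ha p, ha' p]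
      ring
    simp only [hb, mul_zpow, prod_mul_distrib, hscale, mul_assoc]
  rw [hmain, sum_congr rfl fun p hp => hterm p (mem_filter.1 hp).2, ← mul_sum,
    ← prod_sub_zpow_pred_sub_one l hl hv ht]
  ring

end PartialFractions

theorem Finset.Nat.sum_antidiagonalTuple_insertNth_zero {M : Type*} [AddCommMonoid M] {n : ℕ}
    (p : Fin (n + 1)) (N : ℕ) (F : (Fin (n + 1) → ℕ) → M) :
    ∑ l ∈ antidiagonalTuple n N, F (p.insertNth 0 l)
      = ∑ l ∈ antidiagonalTuple (n + 1) N with l p = 0, F l := by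
  refine sum_nbij' (fun l => p.insertNth 0 l) (fun l => p.removeNth l) ?_ ?_ ?_ ?_ (fun _ _ => rfl)
  · intro l hl
    simpa [mem_antidiagonalTuple, Fin.sum_univ_succAbove _ p] using hl
  · intro l hl
    rw [mem_filter, mem_antidiagonalTuple] at hl
    rw [mem_antidiagonalTuple, ← hl.1, Fin.sum_univ_succAbove _ p, hl.2, zero_add]
    rfl
  · intro l _
    simp
  · intro l hl
    rw [← (mem_filter.1 hl).2]
    exact Fin.insertNth_self_removeNth p l

theorem Fin.prod_erase_eq_prod_succAbove {M : Type*} [CommMonoid M] {n : ℕ} (p : Fin (n + 1))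
    (f : Fin (n + 1) → M) : ∏ i ∈ univ.erase p, f i = ∏ q, f (p.succAbove q) := by
  rw [Fin.univ_succAbove n p, erase_cons, prod_map]
  rfl

noncomputable def bernoulliWeight {r : ℕ} (x : Fin r → ℝ) (l : Fin r → ℕ) : ℝ :=
  ∏ i, Polynomial.aeval (x i) (Polynomial.bernoulli (l i)) / (Nat.factorial (l i))

theorem bernoulliWeight_insertNth_zero {n : ℕ} (x : Fin (n + 1) → ℝ) (p : Fin (n + 1))
    (l : Fin n → ℕ) :
    bernoulliWeight x (p.insertNth 0 l) = bernoulliWeight (fun q => x (p.succAbove q)) l := by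
  simp [bernoulliWeight, Fin.prod_univ_succAbove _ p, Polynomial.bernoulli_zero]

theorem zetaFml_eq_sum_bernoulliWeight_mul (m : ℕ) {r : ℕ} (a x : Fin r → ℝ) :
    zetaFml m a x = (-1 : ℝ) ^ r * (Nat.factorial (m - 1)) *
      ∑ l ∈ Finset.Nat.antidiagonalTuple r (m + r - 1),
        bernoulliWeight x l * ∏ i, a i ^ ((l i : ℤ) - 1) := by
  unfold zetaFml bernoulliWeight
  refine congrArg _ (sum_congr rfl fun l _ => ?_)
  rw [← prod_mul_distrib]
  exact prod_congr rfl fun i _ => div_mul_eq_mul_div _ _ _ |>.symm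

theorem zetaFml_succAbove (m : ℕ) {n : ℕ} (p : Fin (n + 1)) (c x : Fin (n + 1) → ℝ) :
    zetaFml m (fun q => c (p.succAbove q)) (fun q => x (p.succAbove q))
      = (-1 : ℝ) ^ n * (Nat.factorial (m - 1)) *
        ∑ l ∈ Finset.Nat.antidiagonalTuple (n + 1) (m + n - 1) with l p = 0,
          bernoulliWeight x l * ∏ i ∈ univ.erase p, c i ^ ((l i : ℤ) - 1) := by
  rw [zetaFml_eq_sum_bernoulliWeight_mul, ← Finset.Nat.sum_antidiagonalTuple_insertNth_zero]
  refine congrArg _ (sum_congr rfl fun l _ => ?_)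
  rw [bernoulliWeight_insertNth_zero, Fin.prod_erase_eq_prod_succAbove]
  simp

/-- with nonzero `a`, `a'` satisfying `a_q a'_p - a_p a'_q ≠ 0` for `p ≠ q`,
`∑_p ζ_fml(-1, (a_q/a_p - a'_q/a'_p)_{q ≠ p}, (x_q)_{q ≠ p}) = ζ_fml(0, a', x) - ζ_fml(0, a, x)`.
Here `ζ_fml(-1, ·, ·) = zetaFml 2` and `ζ_fml(0, ·, ·) = zetaFml 1`. -/
theorem zetaFml_sum_deleted (r : ℕ) (a a' x : Fin (r + 2) → ℝ)
    (ha : ∀ i, a i ≠ 0) (ha' : ∀ i, a' i ≠ 0)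
    (hnd : ∀ p q : Fin (r + 2), p ≠ q → a q * a' p - a p * a' q ≠ 0) :
    ∑ p : Fin (r + 2),
        zetaFml 2 (fun q : Fin (r + 1) => a (p.succAbove q) / a p - a' (p.succAbove q) / a' p)
          (fun q : Fin (r + 1) => x (p.succAbove q))
      = zetaFml 1 a' x - zetaFml 1 a x := by
  set b : Fin (r + 2) → Fin (r + 2) → ℝ := fun p i => a i / a p - a' i / a' p
  set T := Finset.Nat.antidiagonalTuple (r + 2) (r + 2)
  have hT : ∀ l ∈ T, ∑ i, l i = Fintype.card (Fin (r + 2)) := fun l hl => by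
    rw [Fintype.card_fin]; exact Finset.Nat.mem_antidiagonalTuple.1 hl
  calc _ = ∑ p, (-1 : ℝ) ^ (r + 1) *
        ∑ l ∈ T with l p = 0, bernoulliWeight x l * ∏ i ∈ univ.erase p, b p i ^ ((l i : ℤ) - 1) :=
        sum_congr rfl fun p _ => zetaFml_succAbove 2 p (b p) x |>.trans
          (by norm_num [T, show 2 + (r + 1) - 1 = r + 2 by omega])
    _ = (-1 : ℝ) ^ (r + 1) * ∑ l ∈ T,
        bernoulliWeight x l * ∑ p with l p = 0, ∏ i ∈ univ.erase p, b p i ^ ((l i : ℤ) - 1) := by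
        rw [← mul_sum]
        congr 1
        simp only [sum_filter, mul_sum, mul_ite, mul_zero]
        exact sum_comm
    _ = (-1 : ℝ) ^ (r + 1) * ∑ l ∈ T,
        bernoulliWeight x l * (∏ i, a i ^ ((l i : ℤ) - 1) - ∏ i, a' i ^ ((l i : ℤ) - 1)) := by
        refine congrArg _ (sum_congr rfl fun l hl => ?_)
        rw [prod_zpow_pred_sub_prod_zpow_pred l (hT l hl) ha ha' hnd]
    _ = zetaFml 1 a' x - zetaFml 1 a x := by
        simp only [zetaFml_eq_sum_bernoulliWeight_mul, mul_sub, sum_sub_distrib, tsub_self,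
          Nat.factorial_zero, Nat.cast_one, mul_one, add_tsub_cancel_left, T]
        ring
end
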